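/- (Corollary 2, first part: explicit minimization of the EMD under an EMD constraint, metric case.) Let A be a nonempty finite set and let d : A × A → ℝ be a metric on A (nonnegative, d(a,b) = 0 iff a = b, symmetric, satisfying the triangle inequality). Let P_0, P be PMFs on A and Δ_0 ≥ 0. Then min over PMFs P_Y on A with EMD_d(P_Y, P_0) ≤ Δ_0 of EMD_d(P_Y, P) equals max{ EMD_d(P_0, P) − Δ_0, 0 }. -/

import Mathlib

open scoped Classical
open Finset Filter

noncomputable section

/-- A probability mass function on a finite alphabet, as a real-valued function. -/
def IsPMF {A : Type} [Fintype A] (P : A → ℝ) : Prop :=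
  (∀ a, 0 ≤ P a) ∧ ∑ a, P a = 1

/-- Kullback--Leibler divergence `D(Q‖P) = ∑_{a : Q a > 0} Q a · ln (Q a / P a)`. -/
def klDiv {A : Type} [Fintype A] (Q P : A → ℝ) : ℝ :=
  ∑ a, if 0 < Q a then Q a * Real.log (Q a / P a) else 0

/-- First marginal of a joint PMF on `A × A`. -/
def margX {A : Type} [Fintype A] (Q : A × A → ℝ) : A → ℝ := fun a => ∑ b, Q (a, b)

/-- Second marginal of a joint PMF on `A × A`. -/
def margY {A : Type} [Fintype A] (Q : A × A → ℝ) : A → ℝ := fun b => ∑ a, Q (a, b)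

/-- Expected distortion of a joint PMF. -/
def expDist {A : Type} [Fintype A] (d : A → A → ℝ) (Q : A × A → ℝ) : ℝ :=
  ∑ q : A × A, Q q * d q.1 q.2

/-- Generalized divergence `D̃_Δ(P_Y, P)`: minimum of `D(Q_X‖P)` over joint PMFs `Q`
with second marginal `P_Y` and expected distortion at most `Δ`. -/
def Dtilde {A : Type} [Fintype A] (d : A → A → ℝ) (Δ : ℝ) (PY P : A → ℝ) : ℝ :=
  sInf {v | ∃ Q : A × A → ℝ,
    IsPMF Q ∧ margY Q = PY ∧ expDist d Q ≤ Δ ∧ v = klDiv (margX Q) P}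

/-- Earth mover distance between two PMFs. -/
def EMD {A : Type} [Fintype A] (d : A → A → ℝ) (P P' : A → ℝ) : ℝ :=
  sInf {v | ∃ R : A × A → ℝ,
    IsPMF R ∧ margX R = P ∧ margY R = P' ∧ v = expDist d R}

/-- Memoryless (product) probability of a sequence. -/
def seqProb {A : Type} {n : ℕ} (P : A → ℝ) (x : Fin n → A) : ℝ := ∏ i, P (x i)

/-- Additive extension of a per-letter distortion to sequences. -/
def dSeq {A : Type} {n : ℕ} (d : A → A → ℝ) (x y : Fin n → A) : ℝ := ∑ i, d (x i) (y i)

/-- Empirical PMF (type) of a sequence. -/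
def empP {A : Type} [Fintype A] [DecidableEq A] {n : ℕ} (x : Fin n → A) : A → ℝ :=
  fun a => ((univ.filter fun i => x i = a).card : ℝ) / (n : ℝ)

/-- Empirical entropy of a sequence. -/
def empEnt {A : Type} [Fintype A] [DecidableEq A] {n : ℕ} (y : Fin n → A) : ℝ :=
  -∑ a, if 0 < empP y a then empP y a * Real.log (empP y a) else 0

/-- Conditional type class `T(y|x)`. -/
def condTypeClass {A : Type} [Fintype A] [DecidableEq A] {n : ℕ} (x y : Fin n → A) :
    Finset (Fin n → A) :=
  univ.filter fun y' => ∀ a b : A,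
    (univ.filter fun i => x i = a ∧ y' i = b).card
      = (univ.filter fun i => x i = a ∧ y i = b).card

/-- Number of distinct conditional type classes `T(y|x)` arising from `y` with
`dn x y ≤ n·Δ`. -/
def numCondTypes {A : Type} [Fintype A] [DecidableEq A] {n : ℕ}
    (dn : (Fin n → A) → (Fin n → A) → ℝ) (Δ : ℝ) (x : Fin n → A) : ℕ :=
  ((univ.filter fun y => dn x y ≤ (n : ℝ) * Δ).image fun y => condTypeClass x y).card

/-- The optimal attack channel `A*_Δ(y|x) = c_n(x)/|T(y|x)|` on admissible `y`,
and `0` otherwise; here `c_n(x)` is the reciprocal of the number of admissible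
conditional type classes. -/
def Astar {A : Type} [Fintype A] [DecidableEq A] {n : ℕ}
    (dn : (Fin n → A) → (Fin n → A) → ℝ) (Δ : ℝ) (x y : Fin n → A) : ℝ :=
  if dn x y ≤ (n : ℝ) * Δ then
    ((numCondTypes dn Δ x : ℝ))⁻¹ / ((condTypeClass x y).card : ℝ)
  else 0

/-- A channel on `A^n`: `W x y` is the conditional probability of output `y` given input `x`. -/
def IsChannel {A : Type} [Fintype A] {n : ℕ}
    (W : (Fin n → A) → (Fin n → A) → ℝ) : Prop :=
  (∀ x y, 0 ≤ W x y) ∧ ∀ x, ∑ y, W x y = 1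

/-- The class `C_Δ` of admissible channels: those assigning zero probability to any
`y` with `dn x y > n·Δ`. -/
def InC {A : Type} [Fintype A] {n : ℕ}
    (dn : (Fin n → A) → (Fin n → A) → ℝ) (Δ : ℝ)
    (W : (Fin n → A) → (Fin n → A) → ℝ) : Prop :=
  IsChannel W ∧ ∀ x y, (n : ℝ) * Δ < dn x y → W x y = 0

/-- False positive probability: `Φ y` is the probability of deciding `H₁` given `y`. -/
def PFP {A : Type} [Fintype A] {n : ℕ} (P0 : A → ℝ) (Φ : (Fin n → A) → ℝ)
    (A0 : (Fin n → A) → (Fin n → A) → ℝ) : ℝ :=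
  ∑ x, ∑ y, seqProb P0 x * A0 x y * Φ y

/-- False negative probability. -/
def PFN {A : Type} [Fintype A] {n : ℕ} (P1 : A → ℝ) (Φ : (Fin n → A) → ℝ)
    (A1 : (Fin n → A) → (Fin n → A) → ℝ) : ℝ :=
  ∑ x, ∑ y, seqProb P1 x * A1 x y * (1 - Φ y)

/-- Sequence-level generalized divergence
`D̃ⁿ_Δ(y,P) = min_{x : d(x,y) ≤ nΔ} D(P̂_x‖P)`. -/
def DtildeN {A : Type} [Fintype A] [DecidableEq A] {n : ℕ} (d : A → A → ℝ) (Δ : ℝ)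
    (y : Fin n → A) (P : A → ℝ) : ℝ :=
  sInf {v | ∃ x : Fin n → A, dSeq d x y ≤ (n : ℝ) * Δ ∧ v = klDiv (empP x) P}

/-! Lower bound: gluing couplings along a shared marginal makes `EMD d` satisfy the triangle
inequality, so `EMD d P0 P ≤ EMD d P0 PY + EMD d PY P ≤ Δ0 + EMD d PY P`. Upper bound: `EMD d` is
jointly convex (mix the couplings) and vanishes on the diagonal, so the mixture
`PY = (1 - t) • P0 + t • P` with `t = Δ0 / EMD d P0 P` lies within `Δ0` of `P0` and within
`EMD d P0 P - Δ0` of `P`. -/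

section Coupling

variable {A : Type} [Fintype A]

def IsCoupling (P P' : A → ℝ) (R : A × A → ℝ) : Prop :=
  IsPMF R ∧ margX R = P ∧ margY R = P'

theorem IsPMF.combo {ι : Type} [Fintype ι] {P Q : ι → ℝ} {a b : ℝ} (ha : 0 ≤ a) (hb : 0 ≤ b)
    (hab : a + b = 1) (hP : IsPMF P) (hQ : IsPMF Q) : IsPMF (a • P + b • Q) := by
  refine ⟨fun i => add_nonneg (mul_nonneg ha (hP.1 i)) (mul_nonneg hb (hQ.1 i)), ?_⟩
  simp only [Pi.add_apply, Pi.smul_apply, smul_eq_mul, sum_add_distrib, ← mul_sum, hP.2, hQ.2,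
    mul_one, hab]

theorem IsPMF.le_margY {R : A × A → ℝ} (hR : IsPMF R) (a b : A) : R (a, b) ≤ margY R b :=
  single_le_sum (fun a' _ => hR.1 (a', b)) (mem_univ a)

theorem IsPMF.le_margX {R : A × A → ℝ} (hR : IsPMF R) (a b : A) : R (a, b) ≤ margX R a :=
  single_le_sum (fun b' _ => hR.1 (a, b')) (mem_univ b)

theorem sum_eq_sum_margX (R : A × A → ℝ) : ∑ q, R q = ∑ a, margX R a :=
  Fintype.sum_prod_type R

theorem IsPMF.margY_nonneg {R : A × A → ℝ} (hR : IsPMF R) (b : A) : 0 ≤ margY R b :=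
  sum_nonneg fun a _ => hR.1 (a, b)

theorem isCoupling_prod {P P' : A → ℝ} (hP : IsPMF P) (hP' : IsPMF P') :
    IsCoupling P P' fun q => P q.1 * P' q.2 := by
  refine ⟨⟨fun q => mul_nonneg (hP.1 _) (hP'.1 _), ?_⟩, ?_, ?_⟩
  · simp only [Fintype.sum_prod_type, ← mul_sum, hP'.2, mul_one, hP.2]
  · funext a; simp only [margX, ← mul_sum, hP'.2, mul_one]
  · funext b; simp only [margY, ← sum_mul, hP.2, one_mul]

theorem isCoupling_diag {P : A → ℝ} (hP : IsPMF P) :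
    IsCoupling P P fun q => if q.1 = q.2 then P q.1 else 0 := by
  refine ⟨⟨fun q => ?_, ?_⟩, ?_, ?_⟩
  · dsimp only
    split_ifs
    exacts [hP.1 _, le_rfl]
  · simp [Fintype.sum_prod_type, hP.2]
  · funext a; simp [margX]
  · funext b; simp [margY]

theorem IsCoupling.eq_zero_of_left {P P' : A → ℝ} {R : A × A → ℝ} (hR : IsCoupling P P' R)
    {a : A} (ha : P a = 0) (b : A) : R (a, b) = 0 :=
  le_antisymm (by rw [← ha, ← hR.2.1]; exact hR.1.le_margX a b) (hR.1.1 _)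

theorem IsCoupling.eq_zero_of_right {P P' : A → ℝ} {R : A × A → ℝ} (hR : IsCoupling P P' R)
    (a : A) {b : A} (hb : P' b = 0) : R (a, b) = 0 :=
  le_antisymm (by rw [← hb, ← hR.2.2]; exact hR.1.le_margY a b) (hR.1.1 _)

theorem IsCoupling.swap {P P' : A → ℝ} {R : A × A → ℝ} (hR : IsCoupling P P' R) :
    IsCoupling P' P (R ∘ Prod.swap) := by
  refine ⟨⟨fun q => hR.1.1 q.swap, ?_⟩, hR.2.2, hR.2.1⟩
  rw [← hR.1.2]
  exact Fintype.sum_equiv (Equiv.prodComm A A) _ _ fun _ => rfl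

theorem IsCoupling.combo {P P' Q Q' : A → ℝ} {R₁ R₂ : A × A → ℝ} {a b : ℝ} (ha : 0 ≤ a)
    (hb : 0 ≤ b) (hab : a + b = 1) (h₁ : IsCoupling P P' R₁) (h₂ : IsCoupling Q Q' R₂) :
    IsCoupling (a • P + b • Q) (a • P' + b • Q') (a • R₁ + b • R₂) := by
  refine ⟨h₁.1.combo ha hb hab h₂.1, ?_, ?_⟩
  · rw [← h₁.2.1, ← h₂.2.1]
    funext x; simp [margX, sum_add_distrib, mul_sum]
  · rw [← h₁.2.2, ← h₂.2.2]
    funext y; simp [margY, sum_add_distrib, mul_sum]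

end Coupling

section Gluing

variable {A : Type} [Fintype A] {P₀ P₁ P₂ : A → ℝ} {R₁ R₂ : A × A → ℝ}

/-- Glues couplings of `(P₀, P₁)` and `(P₁, P₂)` along the shared marginal `P₁`. Where
`P₁ b = 0` the junk value `x / 0 = 0` is harmless, since then `R₁ (·, b) = 0`. -/
def couplingComp (R₁ R₂ : A × A → ℝ) (P₁ : A → ℝ) : A × A → ℝ :=
  fun q => ∑ b, R₁ (q.1, b) * R₂ (b, q.2) / P₁ b

theorem sum_couplingComp_right (h₁ : IsCoupling P₀ P₁ R₁) (h₂ : IsCoupling P₁ P₂ R₂) (a b : A) :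
    ∑ c, R₁ (a, b) * R₂ (b, c) / P₁ b = R₁ (a, b) := by
  by_cases hb : P₁ b = 0
  · simp [h₁.eq_zero_of_right a hb]
  · have hsum : ∑ c, R₂ (b, c) = P₁ b := congrFun h₂.2.1 b
    rw [← sum_div, ← mul_sum, hsum, mul_div_cancel_right₀ _ hb]

theorem sum_couplingComp_left (h₁ : IsCoupling P₀ P₁ R₁) (h₂ : IsCoupling P₁ P₂ R₂) (b c : A) :
    ∑ a, R₁ (a, b) * R₂ (b, c) / P₁ b = R₂ (b, c) := by
  by_cases hb : P₁ b = 0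
  · simp [h₁.eq_zero_of_right _ hb, h₂.eq_zero_of_left hb c]
  · have hsum : ∑ a, R₁ (a, b) = P₁ b := congrFun h₁.2.2 b
    rw [← sum_div, ← sum_mul, hsum, mul_div_cancel_left₀ _ hb]

theorem couplingComp_summand_nonneg (h₁ : IsCoupling P₀ P₁ R₁) (h₂ : IsCoupling P₁ P₂ R₂) (a b c : A) :
    0 ≤ R₁ (a, b) * R₂ (b, c) / P₁ b :=
  div_nonneg (mul_nonneg (h₁.1.1 _) (h₂.1.1 _)) (h₁.2.2 ▸ h₁.1.margY_nonneg b)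

theorem IsCoupling.comp (h₁ : IsCoupling P₀ P₁ R₁) (h₂ : IsCoupling P₁ P₂ R₂) :
    IsCoupling P₀ P₂ (couplingComp R₁ R₂ P₁) := by
  have hX : margX (couplingComp R₁ R₂ P₁) = P₀ := by
    rw [← h₁.2.1]
    funext a
    simp only [margX, couplingComp]
    rw [sum_comm]
    simp only [sum_couplingComp_right h₁ h₂]
  refine ⟨⟨fun q => sum_nonneg fun b _ => couplingComp_summand_nonneg h₁ h₂ _ _ _, ?_⟩, hX, ?_⟩
  · rw [sum_eq_sum_margX, hX, ← h₁.2.1, ← sum_eq_sum_margX, h₁.1.2]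
  · rw [← h₂.2.2]
    funext c
    simp only [margY, couplingComp]
    rw [sum_comm]
    simp only [sum_couplingComp_left h₁ h₂]

theorem expDist_couplingComp_le {d : A → A → ℝ} (hdtri : ∀ a b c, d a c ≤ d a b + d b c)
    (h₁ : IsCoupling P₀ P₁ R₁) (h₂ : IsCoupling P₁ P₂ R₂) :
    expDist d (couplingComp R₁ R₂ P₁) ≤ expDist d R₁ + expDist d R₂ := by
  set w := fun a b c => R₁ (a, b) * R₂ (b, c) / P₁ b
  calc expDist d (couplingComp R₁ R₂ P₁) = ∑ b, ∑ a, ∑ c, w a b c * d a c := by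
        simp only [expDist, couplingComp, Fintype.sum_prod_type, sum_mul]
        exact (sum_congr rfl fun a _ => sum_comm).trans sum_comm
    _ ≤ ∑ b, ∑ a, ∑ c, (w a b c * d a b + w a b c * d b c) := by
        gcongr with b _ a _ c _
        rw [← mul_add]
        exact mul_le_mul_of_nonneg_left (hdtri a b c) (couplingComp_summand_nonneg h₁ h₂ a b c)
    _ = ∑ b, ∑ a, (∑ c, w a b c) * d a b + ∑ b, ∑ c, (∑ a, w a b c) * d b c := by
        simp only [sum_add_distrib, sum_mul]
        congr 1
        exact sum_congr rfl fun b _ => sum_comm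
    _ = expDist d R₁ + expDist d R₂ := by
        simp only [w, sum_couplingComp_right h₁ h₂, sum_couplingComp_left h₁ h₂, expDist,
          Fintype.sum_prod_type]
        rw [sum_comm]

end Gluing

section EMD

variable {A : Type} [Fintype A] {d : A → A → ℝ}

theorem EMD_eq_sInf_image (d : A → A → ℝ) (P P' : A → ℝ) :
    EMD d P P' = sInf (expDist d '' {R | IsCoupling P P' R}) := by
  unfold EMD IsCoupling
  congr 1
  ext v
  simp only [Set.mem_ofPred_eq, Set.mem_image, and_assoc, eq_comm]

theorem expDist_nonneg (hd : ∀ a b, 0 ≤ d a b) {R : A × A → ℝ} (hR : IsPMF R) :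
    0 ≤ expDist d R :=
  sum_nonneg fun q _ => mul_nonneg (hR.1 q) (hd q.1 q.2)

theorem expDist_diag (hdiag : ∀ a, d a a = 0) (P : A → ℝ) :
    expDist d (fun q => if q.1 = q.2 then P q.1 else 0) = 0 :=
  sum_eq_zero fun q _ => by
    dsimp only
    split_ifs with h
    · rw [h, hdiag, mul_zero]
    · rw [zero_mul]

theorem expDist_comp_swap (hdsymm : ∀ a b, d a b = d b a) (R : A × A → ℝ) :
    expDist d (R ∘ Prod.swap) = expDist d R :=
  Fintype.sum_equiv (Equiv.prodComm A A) _ _ fun q => by simp [hdsymm q.1 q.2]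

theorem expDist_combo (a b : ℝ) (R₁ R₂ : A × A → ℝ) :
    expDist d (a • R₁ + b • R₂) = a * expDist d R₁ + b * expDist d R₂ := by
  simp only [expDist, mul_sum, ← sum_add_distrib]
  exact sum_congr rfl fun q _ => by simp only [Pi.add_apply, Pi.smul_apply, smul_eq_mul]; ring

theorem bddBelow_expDist_image (hd : ∀ a b, 0 ≤ d a b) (P P' : A → ℝ) :
    BddBelow (expDist d '' {R | IsCoupling P P' R}) :=
  ⟨0, by rintro _ ⟨R, hR, rfl⟩; exact expDist_nonneg hd hR.1⟩

theorem EMD_nonneg (hd : ∀ a b, 0 ≤ d a b) (P P' : A → ℝ) : 0 ≤ EMD d P P' := by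
  rw [EMD_eq_sInf_image]
  exact Real.sInf_nonneg (by rintro _ ⟨R, hR, rfl⟩; exact expDist_nonneg hd hR.1)

theorem EMD_le_expDist (hd : ∀ a b, 0 ≤ d a b) {P P' : A → ℝ} {R : A × A → ℝ}
    (hR : IsCoupling P P' R) : EMD d P P' ≤ expDist d R := by
  rw [EMD_eq_sInf_image]
  exact csInf_le (bddBelow_expDist_image hd P P') ⟨R, hR, rfl⟩

theorem exists_isCoupling_expDist_lt {P P' : A → ℝ} (hP : IsPMF P) (hP' : IsPMF P') {ε : ℝ}
    (hε : 0 < ε) : ∃ R, IsCoupling P P' R ∧ expDist d R < EMD d P P' + ε := by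
  have hne : (expDist d '' {R | IsCoupling P P' R}).Nonempty :=
    ⟨_, _, isCoupling_prod hP hP', rfl⟩
  rw [EMD_eq_sInf_image]
  obtain ⟨_, ⟨R, hR, rfl⟩, hlt⟩ := exists_lt_of_csInf_lt hne (lt_add_of_pos_right _ hε)
  exact ⟨R, hR, hlt⟩

theorem EMD_self (hd : ∀ a b, 0 ≤ d a b) (hdiag : ∀ a, d a a = 0) {P : A → ℝ} (hP : IsPMF P) :
    EMD d P P = 0 :=
  ((EMD_le_expDist hd (isCoupling_diag hP)).trans_eq (expDist_diag hdiag P)).antisymm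
    (EMD_nonneg hd P P)

theorem EMD_comm (hdsymm : ∀ a b, d a b = d b a) (P P' : A → ℝ) :
    EMD d P P' = EMD d P' P := by
  suffices h : ∀ P P' : A → ℝ,
      expDist d '' {R | IsCoupling P P' R} ⊆ expDist d '' {R | IsCoupling P' P R} by
    simp only [EMD_eq_sInf_image]
    exact congrArg sInf ((h P P').antisymm (h P' P))
  rintro P P' _ ⟨R, hR, rfl⟩
  exact ⟨R ∘ Prod.swap, hR.swap, expDist_comp_swap hdsymm R⟩

theorem EMD_triangle (hd : ∀ a b, 0 ≤ d a b) (hdtri : ∀ a b c, d a c ≤ d a b + d b c)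
    {P₀ P₁ P₂ : A → ℝ} (hP₀ : IsPMF P₀) (hP₁ : IsPMF P₁) (hP₂ : IsPMF P₂) :
    EMD d P₀ P₂ ≤ EMD d P₀ P₁ + EMD d P₁ P₂ := by
  refine le_of_forall_pos_le_add fun ε hε => ?_
  obtain ⟨R₁, h₁, hR₁⟩ := exists_isCoupling_expDist_lt (d := d) hP₀ hP₁ (half_pos hε)
  obtain ⟨R₂, h₂, hR₂⟩ := exists_isCoupling_expDist_lt (d := d) hP₁ hP₂ (half_pos hε)
  calc EMD d P₀ P₂ ≤ expDist d (couplingComp R₁ R₂ P₁) := EMD_le_expDist hd (h₁.comp h₂)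
    _ ≤ expDist d R₁ + expDist d R₂ := expDist_couplingComp_le hdtri h₁ h₂
    _ ≤ EMD d P₀ P₁ + EMD d P₁ P₂ + ε := by linarith

theorem EMD_combo_le (hd : ∀ a b, 0 ≤ d a b) {P P' Q Q' : A → ℝ} (hP : IsPMF P)
    (hP' : IsPMF P') (hQ : IsPMF Q) (hQ' : IsPMF Q') {a b : ℝ} (ha : 0 ≤ a) (hb : 0 ≤ b)
    (hab : a + b = 1) :
    EMD d (a • P + b • Q) (a • P' + b • Q') ≤ a * EMD d P P' + b * EMD d Q Q' := by
  refine le_of_forall_pos_le_add fun ε hε => ?_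
  obtain ⟨R₁, h₁, hR₁⟩ := exists_isCoupling_expDist_lt (d := d) hP hP' hε
  obtain ⟨R₂, h₂, hR₂⟩ := exists_isCoupling_expDist_lt (d := d) hQ hQ' hε
  have hε_split : a * ε + b * ε = ε := by rw [← add_mul, hab, one_mul]
  calc EMD d (a • P + b • Q) (a • P' + b • Q')
      ≤ expDist d (a • R₁ + b • R₂) := EMD_le_expDist hd (h₁.combo ha hb hab h₂)
    _ = a * expDist d R₁ + b * expDist d R₂ := expDist_combo a b R₁ R₂
    _ ≤ a * (EMD d P P' + ε) + b * (EMD d Q Q' + ε) := by gcongr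
    _ = a * EMD d P P' + b * EMD d Q Q' + ε := by linear_combination hε_split

end EMD

theorem exists_isPMF_EMD_le_and_EMD_le {A : Type} [Fintype A] {d : A → A → ℝ}
    (hd : ∀ a b, 0 ≤ d a b) (hdiag : ∀ a, d a a = 0) (hdsymm : ∀ a b, d a b = d b a)
    {P₀ P : A → ℝ} (hP₀ : IsPMF P₀) (hP : IsPMF P) {Δ₀ : ℝ} (hΔ₀ : 0 ≤ Δ₀) :
    ∃ PY, IsPMF PY ∧ EMD d PY P₀ ≤ Δ₀ ∧ EMD d PY P ≤ max (EMD d P₀ P - Δ₀) 0 := by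
  rcases le_or_gt (EMD d P₀ P) Δ₀ with hle | hlt
  · exact ⟨P, hP, (EMD_comm hdsymm P P₀).trans_le hle,
      (EMD_self hd hdiag hP).trans_le (le_max_right _ _)⟩
  set D := EMD d P₀ P
  have hD : 0 < D := hΔ₀.trans_lt hlt
  set t := Δ₀ / D
  have ht₀ : 0 ≤ t := div_nonneg hΔ₀ hD.le
  have ht₁ : 0 ≤ 1 - t := sub_nonneg.2 ((div_le_one hD).2 hlt.le)
  have htD : t * D = Δ₀ := div_mul_cancel₀ Δ₀ hD.ne'
  have hsum : 1 - t + t = 1 := sub_add_cancel 1 t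
  refine ⟨(1 - t) • P₀ + t • P, hP₀.combo ht₁ ht₀ hsum hP, ?_, ?_⟩
  · calc EMD d ((1 - t) • P₀ + t • P) P₀
        = EMD d ((1 - t) • P₀ + t • P) ((1 - t) • P₀ + t • P₀) := by rw [Convex.combo_self hsum]
      _ ≤ (1 - t) * EMD d P₀ P₀ + t * EMD d P P₀ :=
        EMD_combo_le hd hP₀ hP₀ hP hP₀ ht₁ ht₀ hsum
      _ = Δ₀ := by rw [EMD_self hd hdiag hP₀, EMD_comm hdsymm P P₀, mul_zero, zero_add, htD]
  · calc EMD d ((1 - t) • P₀ + t • P) P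
        = EMD d ((1 - t) • P₀ + t • P) ((1 - t) • P + t • P) := by rw [Convex.combo_self hsum]
      _ ≤ (1 - t) * EMD d P₀ P + t * EMD d P P :=
        EMD_combo_le hd hP₀ hP hP hP ht₁ ht₀ hsum
      _ = D - Δ₀ := by rw [EMD_self hd hdiag hP, mul_zero, add_zero, sub_mul, one_mul, htD]
      _ ≤ max (D - Δ₀) 0 := le_max_left _ _

theorem emd_min_under_emd_constraint_general
    {A : Type} [Fintype A]
    (d : A → A → ℝ) (hd : ∀ a b, 0 ≤ d a b)
    (hdeq : ∀ a b, d a b = 0 ↔ a = b)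
    (hdsymm : ∀ a b, d a b = d b a)
    (hdtri : ∀ a b c, d a c ≤ d a b + d b c)
    (P0 P : A → ℝ) (hP0 : IsPMF P0) (hP : IsPMF P)
    (Δ0 : ℝ) (hΔ0 : 0 ≤ Δ0) :
    sInf {v | ∃ PY : A → ℝ, IsPMF PY ∧ EMD d PY P0 ≤ Δ0 ∧ v = EMD d PY P}
      = max (EMD d P0 P - Δ0) 0 := by
  have lower : ∀ PY, IsPMF PY → EMD d PY P0 ≤ Δ0 → max (EMD d P0 P - Δ0) 0 ≤ EMD d PY P :=
    fun PY hPY hPY0 => max_le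
      (by linarith [EMD_triangle hd hdtri hP0 hPY hP, EMD_comm hdsymm P0 PY])
      (EMD_nonneg hd PY P)
  obtain ⟨PY, hPY, hPY0, hPYP⟩ := exists_isPMF_EMD_le_and_EMD_le hd
    (fun a => (hdeq a a).2 rfl) hdsymm hP0 hP hΔ0
  refine IsLeast.csInf_eq ⟨⟨PY, hPY, hPY0, (lower PY hPY hPY0).antisymm hPYP⟩, ?_⟩
  rintro _ ⟨PY', hPY', hPY'0, rfl⟩
  exact lower PY' hPY' hPY'0

/-- Corollary 2, first part: explicit minimization of the EMD under an
EMD constraint, metric case. -/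
theorem emd_min_under_emd_constraint
    {A : Type} [Fintype A] [Nonempty A]
    (d : A → A → ℝ) (hd : ∀ a b, 0 ≤ d a b)
    (hdeq : ∀ a b, d a b = 0 ↔ a = b)
    (hdsymm : ∀ a b, d a b = d b a)
    (hdtri : ∀ a b c, d a c ≤ d a b + d b c)
    (P0 P : A → ℝ) (hP0 : IsPMF P0) (hP : IsPMF P)
    (Δ0 : ℝ) (hΔ0 : 0 ≤ Δ0) :
    sInf {v | ∃ PY : A → ℝ, IsPMF PY ∧ EMD d PY P0 ≤ Δ0 ∧ v = EMD d PY P}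
      = max (EMD d P0 P - Δ0) 0 :=
  emd_min_under_emd_constraint_general d hd hdeq hdsymm hdtri P0 P hP0 hP Δ0 hΔ0
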